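/- arXiv:2205.09588 — 8 statements merged into one kernel-verified Lean document; each statement's English description precedes it below -/
import Mathlib

section
/- Let P_1, ..., P_T be orthogonal projections on R^d and M = P_T⋯P_1. Then for any v in R^d, ||(I - M)v||^2 ≤ T(||v||^2 - ||Mv||^2). -/
/-- The product `P (n-1) * ⋯ * P 0` (so that `P 0` is applied first). -/
noncomputable def prodUpTo (d : ℕ)
    (P : ℕ → (EuclideanSpace ℝ (Fin d) →L[ℝ] EuclideanSpace ℝ (Fin d))) :
    ℕ → (EuclideanSpace ℝ (Fin d) →L[ℝ] EuclideanSpace ℝ (Fin d))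
  | 0 => 1
  | n + 1 => P n * prodUpTo d P n

/-!
Write `x n = P (n-1) ⋯ P 0 v`, so that `(1 - M) v = ∑_{n<T} (x n - x (n+1))`. Each increment
`x n - x (n+1) = (1 - P n) (x n)` is orthogonal to `x (n+1)`, so by Pythagoras
`‖x n - x (n+1)‖² = ‖x n‖² - ‖x (n+1)‖²`, and these telescope to `‖v‖² - ‖M v‖²`.
Cauchy–Schwarz on the `T` increments gives the factor `T`.
-/

open Finset

theorem norm_sub_sq_le_mul_sum_norm_sub_succ_sq {E : Type*} [SeminormedAddCommGroup E]
    (x : ℕ → E) (n : ℕ) :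
    ‖x 0 - x n‖ ^ 2 ≤ n * ∑ i ∈ range n, ‖x i - x (i + 1)‖ ^ 2 :=
  calc ‖x 0 - x n‖ ^ 2 = ‖∑ i ∈ range n, (x i - x (i + 1))‖ ^ 2 := by
        rw [sum_range_sub']
    _ ≤ (∑ i ∈ range n, ‖x i - x (i + 1)‖) ^ 2 := by
        gcongr
        exact norm_sum_le _ _
    _ ≤ n * ∑ i ∈ range n, ‖x i - x (i + 1)‖ ^ 2 := by
        simpa using sq_sum_le_card_mul_sum_sq (s := range n) (f := fun i => ‖x i - x (i + 1)‖)

section SymmetricProjection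

variable {𝕜 E : Type*} [RCLike 𝕜] [SeminormedAddCommGroup E] [InnerProductSpace 𝕜 E]

open scoped InnerProductSpace

theorem LinearMap.IsSymmetricProjection.norm_sub_apply_sq {p : E →ₗ[𝕜] E}
    (hp : p.IsSymmetricProjection) (x : E) :
    ‖x - p x‖ ^ 2 = ‖x‖ ^ 2 - ‖p x‖ ^ 2 := by
  have hinner : RCLike.re ⟪x, p x⟫_𝕜 = ‖p x‖ ^ 2 := by
    conv_lhs => rw [← hp.isIdempotentElem]
    rw [Module.End.mul_apply, ← hp.isSymmetric]
    exact inner_self_eq_norm_sq _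
  rw [@norm_sub_sq 𝕜, hinner]
  ring

theorem sum_norm_sub_succ_sq_eq_of_isSymmetricProjection {Q : ℕ → E →ₗ[𝕜] E} {x : ℕ → E}
    {n : ℕ} (hQ : ∀ i < n, (Q i).IsSymmetricProjection) (hx : ∀ i < n, x (i + 1) = Q i (x i)) :
    ∑ i ∈ range n, ‖x i - x (i + 1)‖ ^ 2 = ‖x 0‖ ^ 2 - ‖x n‖ ^ 2 := by
  rw [← sum_range_sub' (fun i => ‖x i‖ ^ 2)]
  refine sum_congr rfl fun i hi => ?_
  rw [mem_range] at hi
  rw [hx i hi]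
  exact (hQ i hi).norm_sub_apply_sq (x i)

end SymmetricProjection

theorem one_cycle_residual_bound (d T : ℕ)
    (P : ℕ → (EuclideanSpace ℝ (Fin d) →L[ℝ] EuclideanSpace ℝ (Fin d)))
    (hsa : ∀ i < T, IsSelfAdjoint (P i)) (hidem : ∀ i < T, P i * P i = P i)
    (v : EuclideanSpace ℝ (Fin d)) :
    ‖((1 : EuclideanSpace ℝ (Fin d) →L[ℝ] EuclideanSpace ℝ (Fin d)) - prodUpTo d P T) v‖ ^ 2
      ≤ (T : ℝ) * (‖v‖ ^ 2 - ‖prodUpTo d P T v‖ ^ 2) := by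
  have hproj : ∀ i < T, (P i).toLinearMap.IsSymmetricProjection := fun i hi =>
    ContinuousLinearMap.IsStarProjection.isSymmetricProjection ⟨hidem i hi, hsa i hi⟩
  calc ‖(1 - prodUpTo d P T) v‖ ^ 2 = ‖prodUpTo d P 0 v - prodUpTo d P T v‖ ^ 2 := rfl
    _ ≤ T * ∑ i ∈ range T, ‖prodUpTo d P i v - prodUpTo d P (i + 1) v‖ ^ 2 :=
        norm_sub_sq_le_mul_sum_norm_sub_succ_sq (fun n => prodUpTo d P n v) T
    _ = T * (‖v‖ ^ 2 - ‖prodUpTo d P T v‖ ^ 2) := by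
        rw [sum_norm_sub_succ_sq_eq_of_isSymmetricProjection hproj fun i _ => rfl]
        rfl
end

section
/- Let P_1, ..., P_T be orthogonal projections on R^d and M = P_T⋯P_1. Then for any v in R^d and any m with 1 ≤ m ≤ T-1, ||(I - P_m)v||^2 ≤ m(||v||^2 - ||Mv||^2). -/
open Finset

section StarProjection

variable {𝕜 E : Type*} [RCLike 𝕜] [NormedAddCommGroup E] [InnerProductSpace 𝕜 E]
  [CompleteSpace E] {p : E →L[𝕜] E}

theorem IsStarProjection.norm_sq_eq_norm_sq_apply_add_norm_sq_sub_apply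
    (hp : IsStarProjection p) (x : E) : ‖x‖ ^ 2 = ‖p x‖ ^ 2 + ‖x - p x‖ ^ 2 := by
  have hpp : p (p x) = p x := congrArg (· x) hp.isIdempotentElem.eq
  have horth : inner 𝕜 (p x) (x - p x) = 0 := by
    rw [← ContinuousLinearMap.adjoint_inner_right, hp.isSelfAdjoint.adjoint_eq, map_sub, hpp,
      sub_self, inner_zero_right]
  simpa only [sq, add_sub_cancel] using
    norm_add_sq_eq_norm_sq_add_norm_sq_of_inner_eq_zero (p x) (x - p x) horth

theorem IsStarProjection.norm_sub_apply_le (hp : IsStarProjection p) (x : E) :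
    ‖x - p x‖ ≤ ‖x‖ := by
  have := hp.norm_sq_eq_norm_sq_apply_add_norm_sq_sub_apply x
  exact le_of_sq_le_sq (by linarith [sq_nonneg ‖p x‖]) (norm_nonneg x)

variable {P : ℕ → E →L[𝕜] E} {w : ℕ → E}

theorem sum_range_norm_sq_sub_succ_eq_of_isStarProjection {n : ℕ}
    (hP : ∀ i < n, IsStarProjection (P i)) (hw : ∀ i, w (i + 1) = P i (w i)) :
    ∑ i ∈ range n, ‖w i - w (i + 1)‖ ^ 2 = ‖w 0‖ ^ 2 - ‖w n‖ ^ 2 := by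
  rw [← sum_range_sub' (fun i ↦ ‖w i‖ ^ 2)]
  refine sum_congr rfl fun i hi ↦ ?_
  rw [hw, (hP i (mem_range.mp hi)).norm_sq_eq_norm_sq_apply_add_norm_sq_sub_apply (w i)]
  ring

theorem norm_sub_apply_le_sum_range_norm_sub_succ (hp : IsStarProjection p) {m : ℕ}
    (hw : w (m + 1) = p (w m)) :
    ‖w 0 - p (w 0)‖ ≤ ∑ i ∈ range (m + 1), ‖w i - w (i + 1)‖ := by
  have hsplit : w 0 - p (w 0) = (w 0 - w m - p (w 0 - w m)) + (w m - w (m + 1)) := by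
    rw [hw, map_sub]; abel
  have hpath : ‖w 0 - w m‖ ≤ ∑ i ∈ range m, ‖w i - w (i + 1)‖ := by
    simpa only [dist_eq_norm] using dist_le_range_sum_dist w m
  calc ‖w 0 - p (w 0)‖ ≤ ‖w 0 - w m - p (w 0 - w m)‖ + ‖w m - w (m + 1)‖ :=
        hsplit ▸ norm_add_le _ _
    _ ≤ ‖w 0 - w m‖ + ‖w m - w (m + 1)‖ := by gcongr; exact hp.norm_sub_apply_le _
    _ ≤ ∑ i ∈ range (m + 1), ‖w i - w (i + 1)‖ := by rw [sum_range_succ]; gcongr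

end StarProjection

/-- Indices start at `0`: `P m` is the paper's `P_{m+1}`, hence the factor `m + 1`. -/
theorem residual_on_task_m_bound (d T : ℕ)
    (P : ℕ → (EuclideanSpace ℝ (Fin d) →L[ℝ] EuclideanSpace ℝ (Fin d)))
    (hsa : ∀ i < T, IsSelfAdjoint (P i)) (hidem : ∀ i < T, P i * P i = P i)
    (v : EuclideanSpace ℝ (Fin d)) (m : ℕ) (hm : m + 1 < T) :
    ‖((1 : EuclideanSpace ℝ (Fin d) →L[ℝ] EuclideanSpace ℝ (Fin d)) - P m) v‖ ^ 2
      ≤ ((m : ℝ) + 1) * (‖v‖ ^ 2 - ‖prodUpTo d P T v‖ ^ 2) := by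
  have hP : ∀ i < T, IsStarProjection (P i) := fun i hi ↦ ⟨hidem i hi, hsa i hi⟩
  set w : ℕ → EuclideanSpace ℝ (Fin d) := fun k ↦ prodUpTo d P k v
  have hw : ∀ i, w (i + 1) = P i (w i) := fun _ ↦ rfl
  set a : ℕ → ℝ := fun i ↦ ‖w i - w (i + 1)‖
  calc ‖((1 : EuclideanSpace ℝ (Fin d) →L[ℝ] EuclideanSpace ℝ (Fin d)) - P m) v‖ ^ 2
      = ‖w 0 - P m (w 0)‖ ^ 2 := rfl
    _ ≤ (∑ i ∈ range (m + 1), a i) ^ 2 := by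
        gcongr
        exact norm_sub_apply_le_sum_range_norm_sub_succ (hP m (by omega)) (hw m)
    _ ≤ ((m : ℝ) + 1) * ∑ i ∈ range (m + 1), a i ^ 2 := by
        simpa using sq_sum_le_card_mul_sum_sq (s := range (m + 1)) (f := a)
    _ ≤ ((m : ℝ) + 1) * ∑ i ∈ range T, a i ^ 2 := by
        gcongr
    _ = ((m : ℝ) + 1) * (‖v‖ ^ 2 - ‖prodUpTo d P T v‖ ^ 2) := by
        rw [sum_range_norm_sq_sub_succ_eq_of_isStarProjection hP hw]; rfl
end

section
/- Let P_1, ..., P_T be orthogonal projections on R^d and M = P_T⋯P_1. Then for every n ≥ 1, the operator norm satisfies ||M^{n-1} - M^n||^2 ≤ T/n. -/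
section Aux

variable {d : ℕ}

local notation "E" => EuclideanSpace ℝ (Fin d)

open scoped RealInnerProductSpace

/-- Pythagoras for a selfadjoint idempotent. -/
lemma proj_pyth (Q : E →L[ℝ] E) (hsa : IsSelfAdjoint Q) (hid : Q * Q = Q) (x : E) :
    ‖x - Q x‖ ^ 2 + ‖Q x‖ ^ 2 = ‖x‖ ^ 2 := by
  have hQQ : Q (Q x) = Q x := by
    have := DFunLike.congr_fun hid x
    simpa [ContinuousLinearMap.mul_apply] using this
  have horth : ⟪x - Q x, Q x⟫ = 0 := by
    have hsym : ⟪Q x, Q x⟫ = ⟪x, Q x⟫ := by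
      have h := hsa.isSymmetric x (Q x)
      simp only [ContinuousLinearMap.coe_coe, hQQ] at h
      exact h
    rw [inner_sub_left, hsym, sub_self]
  have := norm_add_sq_real (x - Q x) (Q x)
  rw [sub_add_cancel, horth] at this
  linarith

lemma proj_norm_le (Q : E →L[ℝ] E) (hsa : IsSelfAdjoint Q) (hid : Q * Q = Q) (x : E) :
    ‖Q x‖ ≤ ‖x‖ := by
  have h := proj_pyth Q hsa hid x
  nlinarith [norm_nonneg (x - Q x), norm_nonneg (Q x), norm_nonneg x, sq_nonneg (‖x - Q x‖)]

lemma prodUpTo_contraction (P : ℕ → (E →L[ℝ] E)) (T : ℕ)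
    (hsa : ∀ i < T, IsSelfAdjoint (P i)) (hidem : ∀ i < T, P i * P i = P i) :
    ∀ k ≤ T, ∀ x : E, ‖prodUpTo d P k x‖ ≤ ‖x‖ := by
  intro k
  induction k with
  | zero => intro _ x; simp [prodUpTo]
  | succ k ih =>
    intro hk x
    have hk' : k ≤ T := Nat.le_of_succ_le hk
    have hkT : k < T := hk
    calc ‖prodUpTo d P (k+1) x‖ = ‖P k (prodUpTo d P k x)‖ := by
          simp [prodUpTo, ContinuousLinearMap.mul_apply]
      _ ≤ ‖prodUpTo d P k x‖ := proj_norm_le (P k) (hsa k hkT) (hidem k hkT) _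
      _ ≤ ‖x‖ := ih hk' x

/-- Key inequality: `‖x - M x‖² ≤ T (‖x‖² - ‖M x‖²)` where `M = P_{T-1} ⋯ P_0`. -/
lemma key_ineq (P : ℕ → (E →L[ℝ] E)) (T : ℕ)
    (hsa : ∀ i < T, IsSelfAdjoint (P i)) (hidem : ∀ i < T, P i * P i = P i) (x : E) :
    ‖x - prodUpTo d P T x‖ ^ 2 ≤ (T : ℝ) * (‖x‖ ^ 2 - ‖prodUpTo d P T x‖ ^ 2) := by
  set Q : ℕ → E := fun k => prodUpTo d P k x with hQ
  have hstep : ∀ i < T, ‖Q i - Q (i+1)‖ ^ 2 = ‖Q i‖ ^ 2 - ‖Q (i+1)‖ ^ 2 := by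
    intro i hi
    have h1 : Q (i+1) = P i (Q i) := by simp [hQ, prodUpTo, ContinuousLinearMap.mul_apply]
    have := proj_pyth (P i) (hsa i hi) (hidem i hi) (Q i)
    rw [← h1] at this
    linarith
  have htel : ∑ i ∈ Finset.range T, (‖Q i‖ ^ 2 - ‖Q (i+1)‖ ^ 2) = ‖x‖ ^ 2 - ‖Q T‖ ^ 2 := by
    rw [Finset.sum_range_sub' (fun i => ‖Q i‖ ^ 2)]
    simp [hQ, prodUpTo]
  have hdecomp : x - Q T = ∑ i ∈ Finset.range T, (Q i - Q (i+1)) := by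
    rw [Finset.sum_range_sub' Q]
    simp [hQ, prodUpTo]
  have hnorm : ‖x - Q T‖ ≤ ∑ i ∈ Finset.range T, ‖Q i - Q (i+1)‖ := by
    rw [hdecomp]; exact norm_sum_le _ _
  have hCS : (∑ i ∈ Finset.range T, ‖Q i - Q (i+1)‖) ^ 2
      ≤ (T : ℝ) * ∑ i ∈ Finset.range T, ‖Q i - Q (i+1)‖ ^ 2 := by
    have := sq_sum_le_card_mul_sum_sq (s := Finset.range T) (f := fun i => ‖Q i - Q (i+1)‖)
    simpa using this
  have hsum : ∑ i ∈ Finset.range T, ‖Q i - Q (i+1)‖ ^ 2 = ‖x‖ ^ 2 - ‖Q T‖ ^ 2 := by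
    rw [← htel]
    exact Finset.sum_congr rfl fun i hi => hstep i (Finset.mem_range.mp hi)
  calc ‖x - Q T‖ ^ 2 ≤ (∑ i ∈ Finset.range T, ‖Q i - Q (i+1)‖) ^ 2 := by
        apply pow_le_pow_left₀ (norm_nonneg _) hnorm
    _ ≤ (T : ℝ) * ∑ i ∈ Finset.range T, ‖Q i - Q (i+1)‖ ^ 2 := hCS
    _ = (T : ℝ) * (‖x‖ ^ 2 - ‖Q T‖ ^ 2) := by rw [hsum]

end Aux

theorem opnorm_power_diff_bound (d T : ℕ)
    (P : ℕ → (EuclideanSpace ℝ (Fin d) →L[ℝ] EuclideanSpace ℝ (Fin d)))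
    (hsa : ∀ i < T, IsSelfAdjoint (P i)) (hidem : ∀ i < T, P i * P i = P i)
    (n : ℕ) (hn : 1 ≤ n) :
    ‖prodUpTo d P T ^ (n - 1) - prodUpTo d P T ^ n‖ ^ 2 ≤ (T : ℝ) / n := by
  set M := prodUpTo d P T with hM
  have hMc : ∀ x, ‖M x‖ ≤ ‖x‖ := prodUpTo_contraction P T hsa hidem T le_rfl
  have hkey : ∀ x, ‖x - M x‖ ^ 2 ≤ (T : ℝ) * (‖x‖ ^ 2 - ‖M x‖ ^ 2) :=
    key_ineq P T hsa hidem
  -- pointwise bound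
  have hpt : ∀ x, ‖(M ^ (n-1) - M ^ n) x‖ ^ 2 ≤ (T : ℝ) / n * ‖x‖ ^ 2 := by
    intro x
    set a : ℕ → ℝ := fun k => ‖(M ^ k) x - (M ^ (k+1)) x‖ ^ 2 with ha
    have hanti : ∀ k, a (k+1) ≤ a k := by
      intro k
      have h1 : (M ^ (k+1)) x - (M ^ (k+2)) x = M ((M ^ k) x - (M ^ (k+1)) x) := by
        rw [map_sub]
        congr 1
        · rw [pow_succ']; rfl
        · rw [show k + 2 = (k+1) + 1 from rfl, pow_succ']; rfl
      have := hMc ((M ^ k) x - (M ^ (k+1)) x)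
      rw [← h1] at this
      have h0 : (0:ℝ) ≤ ‖(M ^ (k+1)) x - (M ^ (k+2)) x‖ := norm_nonneg _
      simp only [ha]
      nlinarith [norm_nonneg ((M ^ k) x - (M ^ (k+1)) x)]
    have hanti' : ∀ j k, j ≤ k → a k ≤ a j := fun j k h =>
      antitone_nat_of_succ_le hanti h
    have hbound : ∀ k, a k ≤ (T : ℝ) * (‖(M ^ k) x‖ ^ 2 - ‖(M ^ (k+1)) x‖ ^ 2) := by
      intro k
      have := hkey ((M ^ k) x)
      have h1 : M ((M ^ k) x) = (M ^ (k+1)) x := by rw [pow_succ']; rfl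
      rw [h1] at this
      exact this
    have hsumle : ∑ k ∈ Finset.range n, a k ≤ (T : ℝ) * ‖x‖ ^ 2 := by
      calc ∑ k ∈ Finset.range n, a k
          ≤ ∑ k ∈ Finset.range n, (T : ℝ) * (‖(M ^ k) x‖ ^ 2 - ‖(M ^ (k+1)) x‖ ^ 2) :=
            Finset.sum_le_sum fun k _ => hbound k
        _ = (T : ℝ) * (‖(M ^ 0) x‖ ^ 2 - ‖(M ^ n) x‖ ^ 2) := by
            rw [← Finset.mul_sum, Finset.sum_range_sub' (fun k => ‖(M ^ k) x‖ ^ 2)]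
        _ ≤ (T : ℝ) * ‖x‖ ^ 2 := by
            have : (0:ℝ) ≤ ‖(M ^ n) x‖ ^ 2 := sq_nonneg _
            have h0 : ‖(M ^ 0) x‖ = ‖x‖ := by simp
            rw [h0]
            have : (0:ℝ) ≤ (T : ℝ) := Nat.cast_nonneg T
            nlinarith [sq_nonneg (‖(M ^ n) x‖)]
    have hnsum : (n : ℝ) * a (n-1) ≤ ∑ k ∈ Finset.range n, a k := by
      have : ∀ k ∈ Finset.range n, a (n-1) ≤ a k := by
        intro k hk
        exact hanti' k (n-1) (Nat.le_sub_one_of_lt (Finset.mem_range.mp hk))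
      calc (n : ℝ) * a (n-1) = ∑ _k ∈ Finset.range n, a (n-1) := by
            rw [Finset.sum_const, Finset.card_range, nsmul_eq_mul]
        _ ≤ ∑ k ∈ Finset.range n, a k := Finset.sum_le_sum this
    have hnpos : (0:ℝ) < n := by exact_mod_cast hn
    have : a (n-1) ≤ (T : ℝ) * ‖x‖ ^ 2 / n := by
      rw [le_div_iff₀ hnpos]
      nlinarith [hnsum, hsumle]
    have hfin : a (n-1) ≤ (T : ℝ) / n * ‖x‖ ^ 2 := by
      rw [div_mul_eq_mul_div]
      linarith [this]
    have happ : (M ^ (n-1) - M ^ n) x = (M ^ (n-1)) x - (M ^ n) x := rfl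
    rw [happ]
    have hn1 : n - 1 + 1 = n := Nat.succ_pred_eq_of_pos hn
    calc ‖(M ^ (n-1)) x - (M ^ n) x‖ ^ 2 = a (n-1) := by rw [ha]; simp [hn1]
      _ ≤ (T : ℝ) / n * ‖x‖ ^ 2 := hfin
  -- from pointwise to operator norm
  have hTn : (0:ℝ) ≤ (T : ℝ) / n := by positivity
  have hopb : ‖M ^ (n-1) - M ^ n‖ ≤ Real.sqrt ((T : ℝ) / n) := by
    apply ContinuousLinearMap.opNorm_le_bound _ (Real.sqrt_nonneg _)
    intro x
    have h := hpt x
    have : ‖(M ^ (n-1) - M ^ n) x‖ = Real.sqrt (‖(M ^ (n-1) - M ^ n) x‖ ^ 2) := by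
      rw [Real.sqrt_sq (norm_nonneg _)]
    rw [this]
    calc Real.sqrt (‖(M ^ (n-1) - M ^ n) x‖ ^ 2)
        ≤ Real.sqrt ((T : ℝ) / n * ‖x‖ ^ 2) := Real.sqrt_le_sqrt h
      _ = Real.sqrt ((T : ℝ) / n) * ‖x‖ := by
          rw [Real.sqrt_mul hTn, Real.sqrt_sq (norm_nonneg _)]
  calc ‖M ^ (n-1) - M ^ n‖ ^ 2 ≤ Real.sqrt ((T : ℝ) / n) ^ 2 :=
        pow_le_pow_left₀ (norm_nonneg _) hopb 2
    _ = (T : ℝ) / n := Real.sq_sqrt hTn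
end

section
/- Let M be a linear operator on R^d with ||M|| ≤ 1. Then for every unit vector u and every n ≥ 1, ||M^n u||^2 - ||M^{n+1} u||^2 ≤ rank(M)/n ≤ d/n. -/
/-!
Positivity of `1 - M†M` gives vectors `vᵢ` with `‖x‖² - ‖M x‖² = ∑ᵢ |⟪vᵢ, x⟫|²`. Put
`tₖ = ∑ᵢ ‖(Mᵏ)† vᵢ‖²`, the trace of `(Mᵏ)† (1 - M†M) Mᵏ`. The decrease
`‖Mⁿ u‖² - ‖Mⁿ⁺¹ u‖²` is at most `tₙ` by Cauchy–Schwarz; `tₖ` is nonincreasing because `M†` is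
a contraction; and `t₁ + ⋯ + tₙ` telescopes to at most the squared Hilbert–Schmidt norm of `M`,
which is at most `rank M` since `M†` is a contraction on an orthonormal basis of `range M`.
Hence `n tₙ ≤ rank M`.
-/

open Finset ContinuousLinearMap RCLike
open scoped InnerProductSpace InnerProduct

theorem Antitone.natCast_mul_le_sum_range_succ {f : ℕ → ℝ} (hf : Antitone f) (n : ℕ) :
    n * f n ≤ ∑ k ∈ range n, f (k + 1) := by
  simpa using card_nsmul_le_sum (range n) (fun k => f (k + 1)) (f n)
    fun k hk => hf (Nat.succ_le_of_lt (mem_range.mp hk))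

namespace ContinuousLinearMap

variable {𝕜 E F : Type*} [RCLike 𝕜] [NormedAddCommGroup E] [InnerProductSpace 𝕜 E]
  [NormedAddCommGroup F] [InnerProductSpace 𝕜 F]

section HilbertSchmidt

variable [CompleteSpace E] {ι κ : Type*} [Fintype ι] [Fintype κ]

theorem sum_norm_sq_adjoint_apply [CompleteSpace F] (X : E →L[𝕜] F)
    (b : OrthonormalBasis κ 𝕜 E) (v : ι → F) :
    ∑ i, ‖(X†) (v i)‖ ^ 2 = ∑ j, ∑ i, ‖⟪v i, X (b j)⟫_𝕜‖ ^ 2 := by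
  simp_rw [← b.sum_sq_norm_inner_left, adjoint_inner_left]
  exact sum_comm

theorem sum_norm_sq_apply_eq_sum_norm_sq_adjoint_apply [CompleteSpace F] (X : E →L[𝕜] F)
    (b : OrthonormalBasis κ 𝕜 E) (c : OrthonormalBasis ι 𝕜 F) :
    ∑ j, ‖X (b j)‖ ^ 2 = ∑ i, ‖(X†) (c i)‖ ^ 2 := by
  simp_rw [sum_norm_sq_adjoint_apply X b c, c.sum_sq_norm_inner_right]

theorem sum_norm_sq_apply_le_finrank_range [FiniteDimensional 𝕜 F] (X : E →L[𝕜] F)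
    (hX : ‖X‖ ≤ 1) (b : OrthonormalBasis κ 𝕜 E) :
    ∑ j, ‖X (b j)‖ ^ 2 ≤ Module.finrank 𝕜 (LinearMap.range X.toLinearMap) := by
  set V := LinearMap.range X.toLinearMap
  let Y : E →L[𝕜] V := X.codRestrict V fun x => LinearMap.mem_range_self _ x
  have hY : ‖Y†‖ ≤ 1 := by
    rw [LinearIsometryEquiv.norm_map]
    exact (Y.opNorm_le_bound (norm_nonneg X) X.le_opNorm).trans hX
  calc ∑ j, ‖X (b j)‖ ^ 2 = ∑ j, ‖Y (b j)‖ ^ 2 := rfl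
    _ = ∑ i, ‖(Y†) (stdOrthonormalBasis 𝕜 V i)‖ ^ 2 :=
      sum_norm_sq_apply_eq_sum_norm_sq_adjoint_apply Y b _
    _ ≤ ∑ i : Fin (Module.finrank 𝕜 V), (1 : ℝ) := by
      gcongr with i
      have h := (Y†).le_of_opNorm_le hY (stdOrthonormalBasis 𝕜 V i)
      rw [one_mul, OrthonormalBasis.norm_eq_one] at h
      exact pow_le_one₀ (norm_nonneg _) h
    _ = Module.finrank 𝕜 V := by simp

end HilbertSchmidt

theorem re_inner_one_sub_adjoint_comp_self_apply [CompleteSpace E] (M : E →L[𝕜] E) (x : E) :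
    re ⟪(1 - M† ∘L M) x, x⟫_𝕜 = ‖x‖ ^ 2 - ‖M x‖ ^ 2 := by
  simp [inner_sub_left, adjoint_inner_left]

theorem exists_sum_norm_inner_sq_eq_norm_sq_sub_norm_sq [FiniteDimensional 𝕜 E]
    (M : E →L[𝕜] E) (hM : ‖M‖ ≤ 1) :
    ∃ (m : ℕ) (v : Fin m → E), ∀ x, ‖x‖ ^ 2 - ‖M x‖ ^ 2 = ∑ i, ‖⟪v i, x⟫_𝕜‖ ^ 2 := by
  have := FiniteDimensional.complete 𝕜 E
  have hpos : (1 - M† ∘L M).IsPositive := by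
    refine isPositive_def'.mpr ⟨.sub (.one _) (isPositive_adjoint_comp_self M).isSelfAdjoint,
      fun x => ?_⟩
    rw [reApplyInnerSelf_apply, re_inner_one_sub_adjoint_comp_self_apply, sub_nonneg]
    exact pow_le_pow_left₀ (norm_nonneg _) (M.le_of_opNorm_le hM x |>.trans_eq (one_mul _)) 2
  obtain ⟨m, v, hv⟩ := isPositive_iff_eq_sum_rankOne.mp hpos
  refine ⟨m, v, fun x => ?_⟩
  rw [← re_inner_one_sub_adjoint_comp_self_apply, hv]
  simp only [_root_.sum_apply, InnerProductSpace.rankOne_apply, sum_inner, inner_smul_left,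
    RCLike.conj_mul, map_sum, ← RCLike.ofReal_pow, RCLike.ofReal_re]

section Defect

variable [CompleteSpace E] {ι κ : Type*} [Fintype ι] [Fintype κ] {M : E →L[𝕜] E} {v : ι → E}

theorem norm_sq_pow_apply_sub_norm_sq_pow_succ_apply_le
    (hv : ∀ x, ‖x‖ ^ 2 - ‖M x‖ ^ 2 = ∑ i, ‖⟪v i, x⟫_𝕜‖ ^ 2) (n : ℕ) (x : E) :
    ‖(M ^ n) x‖ ^ 2 - ‖(M ^ (n + 1)) x‖ ^ 2 ≤ (∑ i, ‖((M ^ n)†) (v i)‖ ^ 2) * ‖x‖ ^ 2 := by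
  rw [pow_succ' M n, mul_apply_eq_comp, hv, sum_mul]
  gcongr with i
  rw [← adjoint_inner_left, ← mul_pow]
  gcongr
  exact norm_inner_le_norm _ _

theorem antitone_sum_norm_sq_adjoint_pow_apply (hM : ‖M‖ ≤ 1) (v : ι → E) :
    Antitone fun k => ∑ i, ‖((M ^ k)†) (v i)‖ ^ 2 := by
  have hM' : ‖M†‖ ≤ 1 := by rwa [LinearIsometryEquiv.norm_map]
  refine antitone_nat_of_succ_le fun k => ?_
  gcongr with i
  rw [pow_succ, mul_def, adjoint_comp, comp_apply]
  exact (M†).le_of_opNorm_le hM' _ |>.trans_eq (one_mul _)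

theorem sum_norm_sq_adjoint_pow_apply_eq
    (hv : ∀ x, ‖x‖ ^ 2 - ‖M x‖ ^ 2 = ∑ i, ‖⟪v i, x⟫_𝕜‖ ^ 2) (b : OrthonormalBasis κ 𝕜 E)
    (k : ℕ) :
    ∑ i, ‖((M ^ k)†) (v i)‖ ^ 2 = ∑ j, (‖(M ^ k) (b j)‖ ^ 2 - ‖(M ^ (k + 1)) (b j)‖ ^ 2) := by
  simp_rw [sum_norm_sq_adjoint_apply _ b v, pow_succ' M k, mul_apply_eq_comp, hv]

theorem sum_range_sum_norm_sq_adjoint_pow_succ_apply_le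
    (hv : ∀ x, ‖x‖ ^ 2 - ‖M x‖ ^ 2 = ∑ i, ‖⟪v i, x⟫_𝕜‖ ^ 2) (b : OrthonormalBasis κ 𝕜 E)
    (n : ℕ) :
    ∑ k ∈ range n, ∑ i, ‖((M ^ (k + 1))†) (v i)‖ ^ 2 ≤ ∑ j, ‖M (b j)‖ ^ 2 := by
  simp_rw [sum_norm_sq_adjoint_pow_apply_eq hv b]
  rw [sum_comm]
  gcongr with j
  rw [sum_range_sub' (fun k => ‖(M ^ (k + 1)) (b j)‖ ^ 2), pow_one]
  exact sub_le_self _ (sq_nonneg _)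

end Defect

end ContinuousLinearMap

theorem decrease_bounded_by_rank (d : ℕ)
    (M : EuclideanSpace ℝ (Fin d) →L[ℝ] EuclideanSpace ℝ (Fin d))
    (hM : ‖M‖ ≤ 1) (u : EuclideanSpace ℝ (Fin d)) (hu : ‖u‖ = 1)
    (n : ℕ) (hn : 1 ≤ n) :
    ‖(M ^ n) u‖ ^ 2 - ‖(M ^ (n + 1)) u‖ ^ 2
        ≤ (Module.finrank ℝ (LinearMap.range M.toLinearMap) : ℝ) / n
      ∧ (Module.finrank ℝ (LinearMap.range M.toLinearMap) : ℝ) / n ≤ (d : ℝ) / n := by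
  obtain ⟨m, v, hv⟩ := M.exists_sum_norm_inner_sq_eq_norm_sq_sub_norm_sq hM
  set t := fun k => ∑ i, ‖((M ^ k)†) (v i)‖ ^ 2
  have hnt : n * t n ≤ Module.finrank ℝ (LinearMap.range M.toLinearMap) :=
    calc n * t n ≤ ∑ k ∈ range n, t (k + 1) :=
          (antitone_sum_norm_sq_adjoint_pow_apply hM v).natCast_mul_le_sum_range_succ n
      _ ≤ ∑ j, ‖M (EuclideanSpace.basisFun (Fin d) ℝ j)‖ ^ 2 :=
          sum_range_sum_norm_sq_adjoint_pow_succ_apply_le hv _ n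
      _ ≤ _ := M.sum_norm_sq_apply_le_finrank_range hM _
  have hn' : (0 : ℝ) < n := by exact_mod_cast hn
  constructor
  · calc ‖(M ^ n) u‖ ^ 2 - ‖(M ^ (n + 1)) u‖ ^ 2 ≤ t n * ‖u‖ ^ 2 :=
          norm_sq_pow_apply_sub_norm_sq_pow_succ_apply_le hv n u
      _ ≤ _ := by rw [hu, one_pow, mul_one, le_div_iff₀ hn']; linarith
  · gcongr
    exact_mod_cast (Submodule.finrank_le _).trans_eq (finrank_euclideanSpace_fin (𝕜 := ℝ))
end

section
/- Let M be a linear operator on R^d with ||M|| ≤ 1, and B_n = (M^n)ᵀ M^n − (M^{n+1})ᵀ M^{n+1}. Then for every n ≥ 1, n·tr(B_n) ≤ tr(Mᵀ M) ≤ rank(M). -/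
/-!
Write `B_k = (M^k)† (1 - M†M) M^k`, so that `tr B_k = f k - f (k+1)` with
`f k = tr ((M^k)† M^k) ≥ 0`, and `B_{k+1} = M† B_k M`. Conjugating a positive operator by a
contraction does not increase its trace, so `tr B_k` is antitone and
`n · tr B_n ≤ tr B_1 + ⋯ + tr B_n = f 1 - f (n+1) ≤ f 1`. For the rank bound, `M = P M` for the
orthogonal projection `P` onto the range of `M`, hence `tr (M†M) = tr (M† P M) ≤ tr P = rank M`.
-/

open ContinuousLinearMap RealInnerProductSpace Module

theorem star_pow_mul_pow_sub_succ {R : Type*} [Ring R] [StarRing R] (a : R) (k : ℕ) :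
    star (a ^ k) * a ^ k - star (a ^ (k + 1)) * a ^ (k + 1)
      = star (a ^ k) * (1 - star a * a) * a ^ k := by
  rw [pow_succ', star_mul]
  noncomm_ring

theorem natCast_mul_sub_succ_le {f : ℕ → ℝ} (hanti : Antitone fun k => f k - f (k + 1)) (n : ℕ)
    (hf : 0 ≤ f (n + 1)) : n * (f n - f (n + 1)) ≤ f 1 := by
  calc n * (f n - f (n + 1)) = ∑ _k ∈ Finset.range n, (f n - f (n + 1)) := by
        rw [Finset.sum_const, Finset.card_range, nsmul_eq_mul]
    _ ≤ ∑ k ∈ Finset.range n, (f (k + 1) - f (k + 1 + 1)) :=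
        Finset.sum_le_sum fun k hk => hanti (Finset.mem_range.mp hk)
    _ = f 1 - f (n + 1) := Finset.sum_range_sub' (fun k => f (k + 1)) n
    _ ≤ f 1 := sub_le_self _ hf

section Trace

variable {E F : Type*} [NormedAddCommGroup E] [InnerProductSpace ℝ E] [FiniteDimensional ℝ E]
  [NormedAddCommGroup F] [InnerProductSpace ℝ F] [FiniteDimensional ℝ F]

theorem trace_mul_nonneg_of_isPositive {A B : E →L[ℝ] E} (hA : A.IsPositive) (hB : B.IsPositive) :
    0 ≤ LinearMap.trace ℝ E (A * B).toLinearMap := by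
  have hA' : (A : E →ₗ[ℝ] E).IsPositive := hA.toLinearMap
  set b := hA'.isSymmetric.eigenvectorBasis rfl
  rw [LinearMap.trace_eq_sum_inner _ b]
  refine Finset.sum_nonneg fun i _ => ?_
  have hAb : A (b i) = hA'.isSymmetric.eigenvalues rfl i • b i :=
    hA'.isSymmetric.apply_eigenvectorBasis rfl i
  calc 0 ≤ hA'.isSymmetric.eigenvalues rfl i * ⟪b i, B (b i)⟫ :=
        mul_nonneg (hA'.nonneg_eigenvalues rfl i) (hB.inner_nonneg_right _)
    _ = ⟪b i, (A * B) (b i)⟫ := by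
        rw [mul_apply_eq_comp, ← adjoint_inner_left A, hA.isSelfAdjoint.adjoint_eq, hAb,
          real_inner_smul_left]

theorem isPositive_one_sub_adjoint_comp_self {N : E →L[ℝ] F} (hN : ‖N‖ ≤ 1) :
    (1 - adjoint N ∘L N).IsPositive := by
  refine isPositive_def'.mpr
    ⟨isPositive_one.isSelfAdjoint.sub (isPositive_adjoint_comp_self N).isSelfAdjoint, fun x => ?_⟩
  have hNx : ‖N x‖ ≤ ‖x‖ := by simpa using N.le_of_opNorm_le hN x
  have hquad : reApplyInnerSelf (1 - adjoint N ∘L N) x = ‖x‖ ^ 2 - ‖N x‖ ^ 2 := by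
    simp [reApplyInnerSelf, inner_sub_left, adjoint_inner_left]
  rw [hquad, sub_nonneg]
  gcongr

theorem trace_adjoint_conj_le {D : F →L[ℝ] F} (hD : D.IsPositive) {N : E →L[ℝ] F}
    (hN : ‖N‖ ≤ 1) :
    LinearMap.trace ℝ E (adjoint N ∘L D ∘L N).toLinearMap
      ≤ LinearMap.trace ℝ F D.toLinearMap := by
  have hcycle : LinearMap.trace ℝ E (adjoint N ∘L D ∘L N).toLinearMap
      = LinearMap.trace ℝ F (D * (N ∘L adjoint N)).toLinearMap := by
    simp only [mul_def, toLinearMap_comp]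
    exact LinearMap.trace_comp_cycle _ _ _
  have hdefect := trace_mul_nonneg_of_isPositive hD
    (isPositive_one_sub_adjoint_comp_self (N := adjoint N) (by rwa [LinearIsometryEquiv.norm_map]))
  rw [adjoint_adjoint, mul_sub, mul_one, toLinearMap_sub, map_sub, sub_nonneg] at hdefect
  rwa [hcycle]

theorem trace_adjoint_comp_self_le_finrank_range {M : E →L[ℝ] F} (hM : ‖M‖ ≤ 1) :
    LinearMap.trace ℝ E (adjoint M ∘L M).toLinearMap
      ≤ finrank ℝ (LinearMap.range M.toLinearMap) := by
  set K := LinearMap.range M.toLinearMap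
  have hPM : K.starProjection ∘L M = M := by
    ext x
    exact K.starProjection_eq_self_iff.mpr (LinearMap.mem_range_self _ x)
  have hP : LinearMap.IsProj K K.starProjection.toLinearMap :=
    ⟨K.starProjection_apply_mem, fun x hx => K.starProjection_eq_self_iff.mpr hx⟩
  calc LinearMap.trace ℝ E (adjoint M ∘L M).toLinearMap
      = LinearMap.trace ℝ E (adjoint M ∘L K.starProjection ∘L M).toLinearMap := by rw [hPM]
    _ ≤ LinearMap.trace ℝ F K.starProjection.toLinearMap :=
        trace_adjoint_conj_le (.of_isStarProjection isStarProjection_starProjection) hM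
    _ = finrank ℝ K := hP.trace

theorem antitone_trace_adjoint_pow_mul_pow_sub_succ {M : E →L[ℝ] E} (hM : ‖M‖ ≤ 1) :
    Antitone fun k => LinearMap.trace ℝ E (adjoint (M ^ k) * M ^ k).toLinearMap
      - LinearMap.trace ℝ E (adjoint (M ^ (k + 1)) * M ^ (k + 1)).toLinearMap := by
  have htrace_sub : ∀ k, LinearMap.trace ℝ E (adjoint (M ^ k) * M ^ k).toLinearMap
      - LinearMap.trace ℝ E (adjoint (M ^ (k + 1)) * M ^ (k + 1)).toLinearMap
      = LinearMap.trace ℝ E (adjoint (M ^ k) * (1 - adjoint M * M) * M ^ k).toLinearMap := by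
    intro k
    simp only [← map_sub, ← toLinearMap_sub, ← star_eq_adjoint, star_pow_mul_pow_sub_succ]
  refine antitone_nat_of_succ_le fun k => ?_
  rw [htrace_sub, htrace_sub]
  have hconj : adjoint (M ^ (k + 1)) * (1 - adjoint M * M) * M ^ (k + 1)
      = adjoint M ∘L (adjoint (M ^ k) * (1 - adjoint M * M) * M ^ k) ∘L M := by
    simp only [pow_succ, ← star_eq_adjoint, star_mul, mul_assoc]
    rfl
  have hpos : (adjoint (M ^ k) * (1 - adjoint M * M) * M ^ k).IsPositive := by
    simpa only [mul_def, comp_assoc] using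
      (isPositive_one_sub_adjoint_comp_self hM).adjoint_conj (M ^ k)
  rw [hconj]
  exact trace_adjoint_conj_le hpos hM

end Trace

theorem trace_Bn_le_rank_general (d : ℕ)
    (M : EuclideanSpace ℝ (Fin d) →L[ℝ] EuclideanSpace ℝ (Fin d))
    (hM : ‖M‖ ≤ 1) (n : ℕ) :
    (n : ℝ) * LinearMap.trace ℝ (EuclideanSpace ℝ (Fin d))
        ((adjoint (M ^ n) * M ^ n - adjoint (M ^ (n + 1)) * M ^ (n + 1)).toLinearMap)
      ≤ LinearMap.trace ℝ (EuclideanSpace ℝ (Fin d)) ((adjoint M * M).toLinearMap)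
    ∧ LinearMap.trace ℝ (EuclideanSpace ℝ (Fin d)) ((adjoint M * M).toLinearMap)
      ≤ (Module.finrank ℝ (LinearMap.range M.toLinearMap) : ℝ) := by
  constructor
  · have h := natCast_mul_sub_succ_le (f := fun k =>
      LinearMap.trace ℝ (EuclideanSpace ℝ (Fin d)) (adjoint (M ^ k) * M ^ k).toLinearMap)
      (antitone_trace_adjoint_pow_mul_pow_sub_succ hM) n
      ((isPositive_adjoint_comp_self (M ^ (n + 1))).toLinearMap.trace_nonneg)
    simpa only [toLinearMap_sub, map_sub, pow_one] using h
  · exact trace_adjoint_comp_self_le_finrank_range hM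

theorem trace_Bn_le_rank (d : ℕ)
    (M : EuclideanSpace ℝ (Fin d) →L[ℝ] EuclideanSpace ℝ (Fin d))
    (hM : ‖M‖ ≤ 1) (n : ℕ) (hn : 1 ≤ n) :
    (n : ℝ) * LinearMap.trace ℝ (EuclideanSpace ℝ (Fin d))
        ((adjoint (M ^ n) * M ^ n - adjoint (M ^ (n + 1)) * M ^ (n + 1)).toLinearMap)
      ≤ LinearMap.trace ℝ (EuclideanSpace ℝ (Fin d)) ((adjoint M * M).toLinearMap)
    ∧ LinearMap.trace ℝ (EuclideanSpace ℝ (Fin d)) ((adjoint M * M).toLinearMap)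
      ≤ (Module.finrank ℝ (LinearMap.range M.toLinearMap) : ℝ) :=
  trace_Bn_le_rank_general d M hM n
end

section
/- Let P_1 and P_2 be orthogonal projections on R^d whose product Q = P_1 P_2 P_1 has spectral decomposition with eigenvalues λ_i ∈ [0,1]. Then for every n ≥ 1, ||(I − P_1)(P_2 P_1)^n|| equals max_i √(λ_i^{2n-1}(1 − λ_i)). -/
/-!
With `T = (1 - P₁)(P₂P₁)ⁿ` and `Q = P₁P₂P₁`, idempotence and self-adjointness of the projections
give `T⋆T = Q^(2n-1) - Q^(2n)`. This operator is diagonal in the eigenbasis of `Q`, with entries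
`λᵢ^(2n-1)(1 - λᵢ) ≥ 0`, and an operator that is diagonal in an orthonormal basis has norm the
largest modulus of its entries; the C⋆-identity `‖T‖² = ‖T⋆T‖` then finishes the proof.
-/

section Algebra

variable {R : Type*}

theorem IsIdempotentElem.mul_mul_pow_eq [Monoid R] {e : R} (he : IsIdempotentElem e) (a : R)
    (n : ℕ) : e * (a * e) ^ n = (e * a * e) ^ n * e := by
  induction n with
  | zero => simp
  | succ n ih =>
    calc e * (a * e) ^ (n + 1) = e * a * e * (e * (a * e) ^ n) := by
          simp only [pow_succ', mul_assoc]; rw [← mul_assoc e e, he.eq]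
      _ = (e * a * e) ^ (n + 1) * e := by rw [ih, pow_succ']; simp only [mul_assoc]

theorem IsIdempotentElem.commute_mul_mul_self [Semigroup R] {e : R} (he : IsIdempotentElem e)
    (a : R) : Commute e (e * a * e) := by
  rw [Commute, SemiconjBy, ← mul_assoc, ← mul_assoc, he.eq, mul_assoc _ e e, he.eq]

theorem IsStarProjection.star_mul_self_one_sub_mul_pow_succ [Ring R] [StarRing R] {p q : R}
    (hp : IsStarProjection p) (hq : IsStarProjection q) (n : ℕ) :
    star ((1 - p) * (q * p) ^ (n + 1)) * ((1 - p) * (q * p) ^ (n + 1))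
      = (p * q * p) ^ (2 * n + 1) - (p * q * p) ^ (2 * n + 2) := by
  set Q := p * q * p with hQ
  have hQ_sa : IsSelfAdjoint Q := hq.isSelfAdjoint.conjugate_self hp.isSelfAdjoint
  have hT : (1 - p) * (q * p) ^ (n + 1) = (1 - p) * q * p * Q ^ n := by
    rw [pow_succ', mul_assoc q, hp.isIdempotentElem.mul_mul_pow_eq,
      ← ((hp.isIdempotentElem.commute_mul_mul_self q).pow_right n).eq]
    simp only [hQ, mul_assoc]
  have hstar : star ((1 - p) * q * p * Q ^ n) = Q ^ n * (p * q * (1 - p)) := by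
    simp only [star_mul, star_pow, hQ_sa.star_eq, hp.isSelfAdjoint.star_eq,
      hq.isSelfAdjoint.star_eq, star_sub, star_one, mul_assoc]
  have hmid : p * q * (1 - p) * (q * p) = Q - Q * Q := by
    simp only [hQ, mul_sub, sub_mul, mul_one, mul_assoc]
    rw [← mul_assoc q q, hq.isIdempotentElem.eq, ← mul_assoc p p, hp.isIdempotentElem.eq]
  calc star ((1 - p) * (q * p) ^ (n + 1)) * ((1 - p) * (q * p) ^ (n + 1))
      = Q ^ n * (p * q * ((1 - p) * (1 - p)) * (q * p)) * Q ^ n := by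
        rw [hT, hstar]; simp only [mul_assoc]
    _ = Q ^ n * (Q - Q * Q) * Q ^ n := by rw [hp.isIdempotentElem.one_sub.eq, hmid]
    _ = Q ^ (2 * n + 1) - Q ^ (2 * n + 2) := by
        rw [mul_sub, sub_mul, ← pow_succ, ← sq, ← pow_add, ← pow_add, ← pow_add]
        congr 2 <;> ring

end Algebra

theorem ContinuousLinearMap.pow_apply_of_apply_eq_smul {R M : Type*} [CommSemiring R]
    [TopologicalSpace M] [AddCommMonoid M] [Module R M] {T : M →L[R] M} {v : M} {c : R}
    (h : T v = c • v) (k : ℕ) : (T ^ k) v = c ^ k • v := by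
  induction k with
  | zero => simp
  | succ k ih => rw [pow_succ', mul_apply_eq_comp, ih, map_smul, h, smul_smul, pow_succ]

theorem LinearIsometryEquiv.opNorm_eq_of_semiconj {𝕜 E F : Type*} [NontriviallyNormedField 𝕜]
    [SeminormedAddCommGroup E] [SeminormedAddCommGroup F] [NormedSpace 𝕜 E] [NormedSpace 𝕜 F]
    (e : E ≃ₗᵢ[𝕜] F) {T : E →L[𝕜] E} {S : F →L[𝕜] F} (h : Function.Semiconj e T S) :
    ‖T‖ = ‖S‖ := by
  refine le_antisymm (T.opNorm_le_bound (norm_nonneg _) fun x => ?_)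
    (S.opNorm_le_bound (norm_nonneg _) fun y => ?_)
  · rw [← e.norm_map (T x), h x, ← e.norm_map x]
    exact S.le_opNorm _
  · obtain ⟨x, rfl⟩ := e.surjective y
    rw [← h x, e.norm_map, e.norm_map]
    exact T.le_opNorm _

open Matrix in
open scoped Matrix.Norms.L2Operator in
theorem OrthonormalBasis.opNorm_eq_norm_of_apply_eq_smul {𝕜 ι E : Type*} [RCLike 𝕜] [Fintype ι]
    [NormedAddCommGroup E] [InnerProductSpace 𝕜 E] (b : OrthonormalBasis ι 𝕜 E)
    {T : E →L[𝕜] E} {μ : ι → 𝕜} (hT : ∀ i, T (b i) = μ i • b i) : ‖T‖ = ‖μ‖ := by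
  classical
  set D := toEuclideanCLM (n := ι) (𝕜 := 𝕜) (diagonal μ)
  have hD : b.repr.toLinearMap ∘ₗ T.toLinearMap = D.toLinearMap ∘ₗ b.repr.toLinearMap :=
    b.toBasis.ext fun i => by
      ext j
      by_cases hji : j = i <;> simp [D, hT, mulVec_diagonal, hji]
  have hsemiconj : Function.Semiconj b.repr T D := LinearMap.congr_fun hD
  rw [b.repr.opNorm_eq_of_semiconj hsemiconj, l2_opNorm_toEuclideanCLM, l2_opNorm_diagonal]

theorem pi_norm_eq_sup'_norm {ι β : Type*} [Fintype ι] [SeminormedAddCommGroup β] (f : ι → β)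
    (hne : (Finset.univ : Finset ι).Nonempty) : ‖f‖ = Finset.univ.sup' hne (‖f ·‖) := by
  refine le_antisymm ((pi_norm_le_iff_of_nonneg ?_).2 fun i => ?_)
    (Finset.sup'_le _ _ fun i _ => norm_le_pi_norm f i)
  · obtain ⟨i, -⟩ := hne
    exact (norm_nonneg _).trans (Finset.le_sup' (‖f ·‖) (Finset.mem_univ i))
  · exact Finset.le_sup' (‖f ·‖) (Finset.mem_univ i)

theorem residual_opnorm_eq_max_eigenvalue_expr (d : ℕ) (hd : 0 < d)
    (P₁ P₂ : EuclideanSpace ℝ (Fin d) →L[ℝ] EuclideanSpace ℝ (Fin d))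
    (hsa₁ : IsSelfAdjoint P₁) (hidem₁ : P₁ * P₁ = P₁)
    (hsa₂ : IsSelfAdjoint P₂) (hidem₂ : P₂ * P₂ = P₂)
    (lam : Fin d → ℝ)
    (b : OrthonormalBasis (Fin d) ℝ (EuclideanSpace ℝ (Fin d)))
    (heig : ∀ i, (P₁ * P₂ * P₁) (b i) = lam i • b i)
    (hlam : ∀ i, lam i ∈ Set.Icc (0 : ℝ) 1)
    (n : ℕ) (hn : 1 ≤ n) :
    ‖((1 : EuclideanSpace ℝ (Fin d) →L[ℝ] EuclideanSpace ℝ (Fin d)) - P₁)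
        * (P₂ * P₁) ^ n‖
      = Finset.univ.sup'
          (Finset.univ_nonempty_iff.mpr (Fin.pos_iff_nonempty.mp hd))
          (fun i => Real.sqrt (lam i ^ (2 * n - 1) * (1 - lam i))) := by
  obtain ⟨m, rfl⟩ : ∃ m, n = m + 1 := ⟨n - 1, by omega⟩
  set hne := Finset.univ_nonempty_iff.mpr (Fin.pos_iff_nonempty.mp hd)
  set T := (1 - P₁) * (P₂ * P₁) ^ (m + 1)
  have hstar : star T * T = (P₁ * P₂ * P₁) ^ (2 * m + 1) - (P₁ * P₂ * P₁) ^ (2 * m + 2) :=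
    IsStarProjection.star_mul_self_one_sub_mul_pow_succ ⟨hidem₁, hsa₁⟩ ⟨hidem₂, hsa₂⟩ m
  have heig_star : ∀ i, (star T * T) (b i) = (lam i ^ (2 * m + 1) * (1 - lam i)) • b i := by
    intro i
    rw [hstar, sub_apply, ContinuousLinearMap.pow_apply_of_apply_eq_smul (heig i),
      ContinuousLinearMap.pow_apply_of_apply_eq_smul (heig i), ← sub_smul]
    congr 1
    ring
  calc ‖T‖ = √‖star T * T‖ := by
        rw [← Real.sqrt_mul_self (norm_nonneg T), ← CStarRing.norm_star_mul_self]
    _ = √(Finset.univ.sup' hne fun i => ‖lam i ^ (2 * m + 1) * (1 - lam i)‖) := by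
        rw [b.opNorm_eq_norm_of_apply_eq_smul heig_star, pi_norm_eq_sup'_norm _ hne]
    _ = Finset.univ.sup' hne fun i => √‖lam i ^ (2 * m + 1) * (1 - lam i)‖ :=
        Finset.apply_sup'_eq_sup'_comp hne _ fun _ _ => Real.sqrt_monotone.map_max
    _ = _ := by
        refine Finset.sup'_congr hne rfl fun i _ => ?_
        obtain ⟨h0, h1⟩ := hlam i
        rw [Real.norm_of_nonneg (mul_nonneg (pow_nonneg h0 _) (sub_nonneg.2 h1)),
          show 2 * (m + 1) - 1 = 2 * m + 1 by omega]
end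

section
/- Let P_1, ..., P_T be orthogonal projections on R^d with M = P_T⋯P_1, and suppose n ≥ T ≥ 3 with k = nT. Then (1/T) Σ_{m=1}^{T-1} ||(I − P_m) M^n||² ≤ T²/√k. -/
/-! By Pythagoras each projection step loses energy `‖y‖² - ‖P y‖² = ‖y - P y‖²`, so over one
cycle the squared steps of an orbit sum to `‖u‖² - ‖M u‖²`. Since `1 - P m` annihilates the
`(m+1)`-st point of the orbit of `u`, the triangle inequality and Cauchy–Schwarz give
`‖(1 - P m) u‖² ≤ (m+1)(‖u‖² - ‖M u‖²) ≤ 2(m+1)‖u‖‖u - M u‖`. The same argument over a whole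
cycle gives `‖y - M y‖² ≤ T(‖y‖² - ‖M y‖²)`; as the increments `M^j y - M^(j+1) y` shrink,
summing these losses over `j < n` yields `n‖M^n - M^(n+1)‖² ≤ T`. Summing the resulting bounds
`2(m+1)√(T/n)` over `m < T - 1` gives `(T-1)T√(T/n) ≤ T³/√(nT)`. -/

open Finset

theorem IsStarProjection.norm_apply_sq_add_norm_sub_apply_sq {𝕜 E : Type*} [RCLike 𝕜]
    [NormedAddCommGroup E] [InnerProductSpace 𝕜 E] [CompleteSpace E] {Q : E →L[𝕜] E}
    (hQ : IsStarProjection Q) (z : E) : ‖Q z‖ ^ 2 + ‖z - Q z‖ ^ 2 = ‖z‖ ^ 2 := by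
  obtain ⟨K, _, rfl⟩ := isStarProjection_iff_eq_starProjection.mp hQ
  rw [K.norm_sq_eq_add_norm_sq_starProjection z, K.starProjection_orthogonal']
  rfl

theorem IsStarProjection.norm_sub_apply_le_s16 {𝕜 E : Type*} [RCLike 𝕜]
    [NormedAddCommGroup E] [InnerProductSpace 𝕜 E] [CompleteSpace E] {Q : E →L[𝕜] E}
    (hQ : IsStarProjection Q) (z : E) : ‖z - Q z‖ ≤ ‖z‖ := by
  have := hQ.norm_apply_sq_add_norm_sub_apply_sq z
  exact pow_le_pow_iff_left₀ (norm_nonneg _) (norm_nonneg _) two_ne_zero |>.mp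
    (by nlinarith [sq_nonneg ‖Q z‖])

theorem ContinuousLinearMap.norm_sq_le_of_forall_norm_apply_sq_le {𝕜 E F : Type*}
    [NontriviallyNormedField 𝕜] [SeminormedAddCommGroup E] [SeminormedAddCommGroup F]
    [NormedSpace 𝕜 E] [NormedSpace 𝕜 F] (f : E →L[𝕜] F) {C : ℝ} (hC : 0 ≤ C)
    (h : ∀ x, ‖f x‖ ^ 2 ≤ C * ‖x‖ ^ 2) : ‖f‖ ^ 2 ≤ C := by
  refine (Real.le_sqrt (norm_nonneg _) hC).mp (f.opNorm_le_bound (Real.sqrt_nonneg C) fun x ↦ ?_)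
  rw [← Real.sqrt_sq (norm_nonneg (f x)), ← Real.sqrt_sq (norm_nonneg x), ← Real.sqrt_mul hC]
  exact Real.sqrt_le_sqrt (h x)

theorem ContinuousLinearMap.norm_pow_apply_le {𝕜 E : Type*} [NontriviallyNormedField 𝕜]
    [SeminormedAddCommGroup E] [NormedSpace 𝕜 E] {M : E →L[𝕜] E} (hM : ∀ y, ‖M y‖ ≤ ‖y‖)
    (n : ℕ) (y : E) : ‖(M ^ n) y‖ ≤ ‖y‖ := by
  induction n with
  | zero => rfl
  | succ n ih => rw [pow_succ']; exact (hM _).trans ih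

/-- The increments along an orbit of a contraction have non-increasing norms, while the energy
losses bounding their squares telescope. -/
theorem norm_pow_apply_sub_pow_succ_apply_sq_mul_le {E : Type*} [SeminormedAddCommGroup E]
    [NormedSpace ℝ E] {M : E →L[ℝ] E} {c : ℝ} (hc : 0 ≤ c) (hM : ∀ y, ‖M y‖ ≤ ‖y‖)
    (henergy : ∀ y, ‖y - M y‖ ^ 2 ≤ c * (‖y‖ ^ 2 - ‖M y‖ ^ 2)) (n : ℕ) (y : E) :
    n * ‖(M ^ n) y - (M ^ (n + 1)) y‖ ^ 2 ≤ c * ‖y‖ ^ 2 := by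
  set b : ℕ → ℝ := fun j ↦ ‖(M ^ j) y - (M ^ (j + 1)) y‖
  have hsucc : ∀ j, (M ^ (j + 1)) y = M ((M ^ j) y) := fun j ↦ by rw [pow_succ']; rfl
  have hb_anti : Antitone b := antitone_nat_of_succ_le fun j ↦ by
    simpa only [b, hsucc (j + 1), hsucc j, map_sub] using hM ((M ^ j) y - (M ^ (j + 1)) y)
  calc (n : ℝ) * b n ^ 2 = ∑ _j ∈ range n, b n ^ 2 := by simp
    _ ≤ ∑ j ∈ range n, b j ^ 2 := sum_le_sum fun j hj ↦
        pow_le_pow_left₀ (norm_nonneg _) (hb_anti (mem_range.mp hj).le) 2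
    _ ≤ ∑ j ∈ range n, c * (‖(M ^ j) y‖ ^ 2 - ‖(M ^ (j + 1)) y‖ ^ 2) := sum_le_sum fun j _ ↦ by
        simpa only [b, hsucc j] using henergy ((M ^ j) y)
    _ = c * (‖y‖ ^ 2 - ‖(M ^ n) y‖ ^ 2) := by
        rw [← mul_sum, sum_range_sub' (fun j ↦ ‖(M ^ j) y‖ ^ 2)]
        simp
    _ ≤ c * ‖y‖ ^ 2 := by gcongr; linarith [sq_nonneg ‖(M ^ n) y‖]

theorem norm_pow_sub_pow_succ_le {E : Type*} [SeminormedAddCommGroup E]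
    [NormedSpace ℝ E] {M : E →L[ℝ] E} {c : ℝ} (hc : 0 ≤ c) (hM : ∀ y, ‖M y‖ ≤ ‖y‖)
    (henergy : ∀ y, ‖y - M y‖ ^ 2 ≤ c * (‖y‖ ^ 2 - ‖M y‖ ^ 2)) {n : ℕ} (hn : 0 < n) :
    ‖M ^ n - M ^ (n + 1)‖ ≤ √(c / n) := by
  have hn' : (0 : ℝ) < n := by exact_mod_cast hn
  refine Real.le_sqrt_of_sq_le <|
    (M ^ n - M ^ (n + 1)).norm_sq_le_of_forall_norm_apply_sq_le (by positivity) fun y ↦ ?_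
  rw [div_mul_eq_mul_div, le_div_iff₀ hn', mul_comm]
  exact norm_pow_apply_sub_pow_succ_apply_sq_mul_le hc hM henergy n y

section CyclicProjections

variable {d T : ℕ} {P : ℕ → (EuclideanSpace ℝ (Fin d) →L[ℝ] EuclideanSpace ℝ (Fin d))}

theorem prodUpTo_succ_apply (i : ℕ) (y : EuclideanSpace ℝ (Fin d)) :
    prodUpTo d P (i + 1) y = P i (prodUpTo d P i y) := rfl

variable (hP : ∀ i < T, IsStarProjection (P i))
include hP

theorem sum_range_norm_prodUpTo_sub_succ_sq (y : EuclideanSpace ℝ (Fin d)) :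
    ∑ i ∈ range T, ‖prodUpTo d P i y - prodUpTo d P (i + 1) y‖ ^ 2
      = ‖y‖ ^ 2 - ‖prodUpTo d P T y‖ ^ 2 := by
  refine (sum_congr rfl fun i hi ↦ ?_).trans (sum_range_sub' (fun i ↦ ‖prodUpTo d P i y‖ ^ 2) T)
  have := (hP i (mem_range.mp hi)).norm_apply_sq_add_norm_sub_apply_sq (prodUpTo d P i y)
  rw [prodUpTo_succ_apply]
  linarith

theorem norm_prodUpTo_apply_le (y : EuclideanSpace ℝ (Fin d)) :
    ‖prodUpTo d P T y‖ ≤ ‖y‖ := by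
  have := sum_range_norm_prodUpTo_sub_succ_sq hP y
  refine pow_le_pow_iff_left₀ (norm_nonneg _) (norm_nonneg _) two_ne_zero |>.mp ?_
  linarith [sum_nonneg fun i (_ : i ∈ range T) ↦
    sq_nonneg ‖prodUpTo d P i y - prodUpTo d P (i + 1) y‖]

theorem norm_sub_prodUpTo_apply_sq_le {j : ℕ} (hj : j ≤ T) (y : EuclideanSpace ℝ (Fin d)) :
    ‖y - prodUpTo d P j y‖ ^ 2 ≤ j * (‖y‖ ^ 2 - ‖prodUpTo d P T y‖ ^ 2) := by
  set a : ℕ → ℝ := fun i ↦ ‖prodUpTo d P i y - prodUpTo d P (i + 1) y‖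
  have htriangle : ‖y - prodUpTo d P j y‖ ≤ ∑ i ∈ range j, a i := by
    have := dist_le_range_sum_dist (fun i ↦ prodUpTo d P i y) j
    simp only [dist_eq_norm] at this
    exact this
  calc ‖y - prodUpTo d P j y‖ ^ 2 ≤ (∑ i ∈ range j, a i) ^ 2 := by gcongr
    _ ≤ j * ∑ i ∈ range j, a i ^ 2 := by
        simpa using sq_sum_le_card_mul_sum_sq (s := range j) (f := a)
    _ ≤ j * ∑ i ∈ range T, a i ^ 2 := by gcongr
    _ = j * (‖y‖ ^ 2 - ‖prodUpTo d P T y‖ ^ 2) := by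
        rw [sum_range_norm_prodUpTo_sub_succ_sq hP]

/-- `1 - P m` kills `prodUpTo d P (m + 1) y`, which lies in the range of `P m`. -/
theorem norm_one_sub_apply_sq_le {m : ℕ} (hm : m < T) (y : EuclideanSpace ℝ (Fin d)) :
    ‖(1 - P m) y‖ ^ 2 ≤ (m + 1) * (‖y‖ ^ 2 - ‖prodUpTo d P T y‖ ^ 2) := by
  set z := y - prodUpTo d P (m + 1) y
  have hkill : (1 - P m) y = z - P m z := by
    have hidem : P m (P m (prodUpTo d P m y)) = P m (prodUpTo d P m y) :=
      congrArg (· (prodUpTo d P m y)) (hP m hm).isIdempotentElem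
    show y - P m y = _
    simp only [z, map_sub, prodUpTo_succ_apply, hidem]
    abel
  calc ‖(1 - P m) y‖ ^ 2 ≤ ‖z‖ ^ 2 := by
        rw [hkill]; gcongr; exact (hP m hm).norm_sub_apply_le_s16 z
    _ ≤ (m + 1) * (‖y‖ ^ 2 - ‖prodUpTo d P T y‖ ^ 2) := by
        exact_mod_cast norm_sub_prodUpTo_apply_sq_le hP hm y

theorem norm_prodUpTo_pow_sub_pow_succ_le {n : ℕ} (hn : 0 < n) :
    ‖prodUpTo d P T ^ n - prodUpTo d P T ^ (n + 1)‖ ≤ √(T / n) :=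
  norm_pow_sub_pow_succ_le (Nat.cast_nonneg T) (norm_prodUpTo_apply_le hP)
    (norm_sub_prodUpTo_apply_sq_le hP le_rfl) hn

theorem norm_one_sub_mul_prodUpTo_pow_sq_le {m : ℕ} (hm : m < T) (n : ℕ) :
    ‖(1 - P m) * prodUpTo d P T ^ n‖ ^ 2
      ≤ 2 * (m + 1) * ‖prodUpTo d P T ^ n - prodUpTo d P T ^ (n + 1)‖ := by
  set M := prodUpTo d P T
  refine ContinuousLinearMap.norm_sq_le_of_forall_norm_apply_sq_le _ (by positivity) fun x ↦ ?_
  set u := (M ^ n) x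
  have hMu : M u = (M ^ (n + 1)) x := by rw [pow_succ']; rfl
  have hMu_le : ‖M u‖ ≤ ‖u‖ := norm_prodUpTo_apply_le hP u
  have hu_le : ‖u‖ ≤ ‖x‖ := ContinuousLinearMap.norm_pow_apply_le (norm_prodUpTo_apply_le hP) n x
  have hdiff : ‖u‖ - ‖M u‖ ≤ ‖M ^ n - M ^ (n + 1)‖ * ‖x‖ := by
    refine (norm_sub_norm_le _ _).trans ?_
    rw [hMu]
    exact (M ^ n - M ^ (n + 1)).le_opNorm x
  calc ‖((1 - P m) * M ^ n) x‖ ^ 2 = ‖(1 - P m) u‖ ^ 2 := rfl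
    _ ≤ (m + 1) * (‖u‖ ^ 2 - ‖M u‖ ^ 2) := norm_one_sub_apply_sq_le hP hm u
    _ = (m + 1) * ((‖u‖ + ‖M u‖) * (‖u‖ - ‖M u‖)) := by ring
    _ ≤ (m + 1) * ((2 * ‖x‖) * (‖M ^ n - M ^ (n + 1)‖ * ‖x‖)) := by
        gcongr
        linarith
    _ = 2 * (m + 1) * ‖M ^ n - M ^ (n + 1)‖ * ‖x‖ ^ 2 := by ring

end CyclicProjections

theorem sum_range_two_mul_succ (N : ℕ) : ∑ m ∈ range N, 2 * ((m : ℝ) + 1) = N * (N + 1) := by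
  induction N with
  | zero => simp
  | succ N ih => rw [sum_range_succ, ih]; push_cast; ring

theorem Real.mul_sqrt_div_eq_sq_div_sqrt_mul {x y : ℝ} (hx : 0 ≤ x) (hy : 0 ≤ y) :
    x * √(x / y) = x ^ 2 / √(y * x) := by
  rcases hx.eq_or_lt with rfl | hx
  · simp
  rcases hy.eq_or_lt with rfl | hy
  · simp
  rw [Real.sqrt_div hx.le, Real.sqrt_mul hy.le]
  field_simp
  rw [Real.sq_sqrt hx.le]

theorem cyclic_worst_case_dimension_free_bound_general (d T n k : ℕ)
    (hn : T ≤ n) (hk : k = n * T)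
    (P : ℕ → (EuclideanSpace ℝ (Fin d) →L[ℝ] EuclideanSpace ℝ (Fin d)))
    (hsa : ∀ i < T, IsSelfAdjoint (P i)) (hidem : ∀ i < T, P i * P i = P i) :
    (1 / (T : ℝ)) * ∑ m ∈ Finset.range (T - 1),
        ‖((1 : EuclideanSpace ℝ (Fin d) →L[ℝ] EuclideanSpace ℝ (Fin d)) - P m)
            * prodUpTo d P T ^ n‖ ^ 2
      ≤ (T : ℝ) ^ 2 / Real.sqrt k := by
  rcases Nat.eq_zero_or_pos T with rfl | hT
  · simp
  have hP : ∀ i < T, IsStarProjection (P i) := fun i hi ↦ ⟨hidem i hi, hsa i hi⟩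
  have hterm : ∀ m ∈ range (T - 1),
      ‖(1 - P m) * prodUpTo d P T ^ n‖ ^ 2 ≤ 2 * (m + 1) * √(T / n) := fun m hm ↦ by
    have hm : m < T - 1 := mem_range.mp hm
    grw [norm_one_sub_mul_prodUpTo_pow_sq_le hP (by omega) n,
      norm_prodUpTo_pow_sub_pow_succ_le hP (by omega)]
  calc (1 / (T : ℝ)) * ∑ m ∈ range (T - 1), ‖(1 - P m) * prodUpTo d P T ^ n‖ ^ 2
      ≤ (1 / T) * ∑ m ∈ range (T - 1), 2 * (m + 1) * √(T / n) :=
        mul_le_mul_of_nonneg_left (sum_le_sum hterm) (by positivity)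
    _ = (T - 1) * √(T / n) := by
        rw [← sum_mul, sum_range_two_mul_succ, Nat.cast_sub hT]
        field_simp
        ring
    _ ≤ T * √(T / n) := by gcongr; linarith
    _ = T ^ 2 / √k := by
        rw [hk, Nat.cast_mul]
        exact Real.mul_sqrt_div_eq_sq_div_sqrt_mul (Nat.cast_nonneg T) (Nat.cast_nonneg n)

/-- 0-indexed: `P m` for `m ∈ {0,…,T-2}` are the paper's tasks `1,…,T-1`. -/
theorem cyclic_worst_case_dimension_free_bound (d T n k : ℕ)
    (hT : 3 ≤ T) (hn : T ≤ n) (hk : k = n * T)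
    (P : ℕ → (EuclideanSpace ℝ (Fin d) →L[ℝ] EuclideanSpace ℝ (Fin d)))
    (hsa : ∀ i < T, IsSelfAdjoint (P i)) (hidem : ∀ i < T, P i * P i = P i) :
    (1 / (T : ℝ)) * ∑ m ∈ Finset.range (T - 1),
        ‖((1 : EuclideanSpace ℝ (Fin d) →L[ℝ] EuclideanSpace ℝ (Fin d)) - P m)
            * prodUpTo d P T ^ n‖ ^ 2
      ≤ (T : ℝ) ^ 2 / Real.sqrt k :=
  cyclic_worst_case_dimension_free_bound_general d T n k hn hk P hsa hidem
end

section
/- Let P_1, ..., P_k be i.i.d. random orthogonal projections on R^d drawn uniformly from a finite set, and let P be an independent copy. Define f(k) = E[tr(P_1⋯P_k (I − P) P_k⋯P_1)]. Then f is non-increasing in k and f(k) ≤ (1/k)·E[tr(P_1)] ≤ d/k. -/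
open ContinuousLinearMap

/-- The product `Q (σ (k-1)) * ⋯ * Q (σ 0)` (so that `Q (σ 0)` is applied first). -/
noncomputable def prodSeq {d : ℕ} {ι : Type*} {k : ℕ}
    (Q : ι → (EuclideanSpace ℝ (Fin d) →L[ℝ] EuclideanSpace ℝ (Fin d)))
    (σ : Fin k → ι) : EuclideanSpace ℝ (Fin d) →L[ℝ] EuclideanSpace ℝ (Fin d) :=
  ((List.ofFn fun i => Q (σ i)).reverse).prod

/-- Expected value (uniform i.i.d. draws `P_1,…,P_k, P` from the finite family `Q`) of
`tr (P_1 ⋯ P_k (I - P) P_k ⋯ P_1)`, where `P_1 ⋯ P_k = (P_k ⋯ P_1)ᵀ` since the `Q j`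
are symmetric. -/
noncomputable def fE (d : ℕ) {ι : Type*} [Fintype ι]
    (Q : ι → (EuclideanSpace ℝ (Fin d) →L[ℝ] EuclideanSpace ℝ (Fin d))) (k : ℕ) : ℝ :=
  ((Fintype.card ι : ℝ))⁻¹ ^ (k + 1) *
    ∑ σ : Fin k → ι, ∑ j : ι,
      LinearMap.trace ℝ (EuclideanSpace ℝ (Fin d))
        ((adjoint (prodSeq Q σ) * (1 - Q j) * prodSeq Q σ).toLinearMap)

namespace RandProjAux

open Matrix

set_option linter.unusedSectionVars false

variable {d : ℕ} {ι : Type*} [Fintype ι]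

noncomputable def toMat (A : EuclideanSpace ℝ (Fin d) →L[ℝ] EuclideanSpace ℝ (Fin d)) :
    Matrix (Fin d) (Fin d) ℝ :=
  LinearMap.toMatrix (EuclideanSpace.basisFun (Fin d) ℝ).toBasis
    (EuclideanSpace.basisFun (Fin d) ℝ).toBasis A.toLinearMap

lemma toMat_mul (A B : EuclideanSpace ℝ (Fin d) →L[ℝ] EuclideanSpace ℝ (Fin d)) :
    toMat (A * B) = toMat A * toMat B := by
  simp only [toMat]
  rw [← LinearMap.toMatrix_mul]
  rfl

lemma toMat_one : toMat (1 : EuclideanSpace ℝ (Fin d) →L[ℝ] EuclideanSpace ℝ (Fin d)) = 1 := by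
  simp only [toMat]
  rw [show (1 : EuclideanSpace ℝ (Fin d) →L[ℝ] EuclideanSpace ℝ (Fin d)).toLinearMap
      = LinearMap.id from rfl, LinearMap.toMatrix_id]

lemma toMat_sub (A B : EuclideanSpace ℝ (Fin d) →L[ℝ] EuclideanSpace ℝ (Fin d)) :
    toMat (A - B) = toMat A - toMat B := by
  simp only [toMat]
  rw [show (A - B).toLinearMap = A.toLinearMap - B.toLinearMap from rfl, map_sub]

lemma toMat_adjoint (A : EuclideanSpace ℝ (Fin d) →L[ℝ] EuclideanSpace ℝ (Fin d)) :
    toMat (adjoint A) = (toMat A)ᵀ := by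
  simp only [toMat]
  rw [show (adjoint A).toLinearMap = LinearMap.adjoint A.toLinearMap from rfl,
    LinearMap.toMatrix_adjoint]
  ext i j
  simp [Matrix.conjTranspose_apply]

lemma trace_toMat (A : EuclideanSpace ℝ (Fin d) →L[ℝ] EuclideanSpace ℝ (Fin d)) :
    LinearMap.trace ℝ (EuclideanSpace ℝ (Fin d)) A.toLinearMap = (toMat A).trace := by
  rw [LinearMap.trace_eq_matrix_trace ℝ (EuclideanSpace.basisFun (Fin d) ℝ).toBasis]
  rfl

noncomputable def pM (N : ι → Matrix (Fin d) (Fin d) ℝ) {k : ℕ} (σ : Fin k → ι) :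
    Matrix (Fin d) (Fin d) ℝ :=
  ((List.ofFn fun i => N (σ i)).reverse).prod

lemma toMat_list_prod (l : List (EuclideanSpace ℝ (Fin d) →L[ℝ] EuclideanSpace ℝ (Fin d))) :
    toMat l.prod = (l.map toMat).prod := by
  induction l with
  | nil => simpa using toMat_one
  | cons a l ih => simp [toMat_mul, ih]

lemma toMat_prodSeq {k : ℕ} (Q : ι → (EuclideanSpace ℝ (Fin d) →L[ℝ] EuclideanSpace ℝ (Fin d)))
    (σ : Fin k → ι) : toMat (prodSeq Q σ) = pM (fun j => toMat (Q j)) σ := by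
  simp only [prodSeq, pM, toMat_list_prod, List.map_reverse, List.map_ofFn]
  rfl

lemma pM_zero (N : ι → Matrix (Fin d) (Fin d) ℝ) (σ : Fin 0 → ι) : pM N σ = 1 := by
  simp [pM]

lemma pM_cons (N : ι → Matrix (Fin d) (Fin d) ℝ) {k : ℕ} (j : ι) (σ : Fin k → ι) :
    pM N (Fin.cons j σ) = pM N σ * N j := by
  simp [pM, List.ofFn_succ]

lemma pM_snoc (N : ι → Matrix (Fin d) (Fin d) ℝ) {k : ℕ} (σ : Fin k → ι) (j : ι) :
    pM N (Fin.snoc σ j) = N j * pM N σ := by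
  rw [pM, pM, List.ofFn_succ']
  simp only [Fin.snoc_castSucc, Fin.snoc_last]
  simp [List.concat_eq_append]

lemma sum_pi_cons {M : Type*} [AddCommMonoid M] {k : ℕ} (f : (Fin (k + 1) → ι) → M) :
    ∑ τ : Fin (k + 1) → ι, f τ = ∑ j : ι, ∑ σ : Fin k → ι, f (Fin.cons j σ) := by
  rw [← Equiv.sum_comp (Fin.consEquiv fun _ => ι) f, Fintype.sum_prod_type]
  rfl

lemma sum_pi_snoc {M : Type*} [AddCommMonoid M] {k : ℕ} (f : (Fin (k + 1) → ι) → M) :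
    ∑ τ : Fin (k + 1) → ι, f τ = ∑ j : ι, ∑ σ : Fin k → ι, f (Fin.snoc σ j) := by
  rw [← Equiv.sum_comp (Fin.snocEquiv fun _ => ι) f, Fintype.sum_prod_type]
  rfl

/-- Frobenius pairing. -/
noncomputable def ip (A B : Matrix (Fin d) (Fin d) ℝ) : ℝ := (Aᵀ * B).trace

lemma ip_symm (A B : Matrix (Fin d) (Fin d) ℝ) : ip A B = ip B A := by
  rw [ip, ip, ← Matrix.trace_transpose, Matrix.transpose_mul, Matrix.transpose_transpose]

lemma trace_transpose_mul_self_nonneg (A : Matrix (Fin d) (Fin d) ℝ) :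
    0 ≤ (Aᵀ * A).trace := by
  simp only [Matrix.trace, Matrix.diag, Matrix.mul_apply, Matrix.transpose_apply]
  exact Finset.sum_nonneg fun i _ => Finset.sum_nonneg fun j _ => mul_self_nonneg _

lemma ip_self_nonneg (A : Matrix (Fin d) (Fin d) ℝ) : 0 ≤ ip A A :=
  trace_transpose_mul_self_nonneg A

lemma ip_add_left (A B C : Matrix (Fin d) (Fin d) ℝ) : ip (A + B) C = ip A C + ip B C := by
  simp [ip, Matrix.transpose_add, Matrix.add_mul]

lemma ip_smul_left (t : ℝ) (A C : Matrix (Fin d) (Fin d) ℝ) : ip (t • A) C = t * ip A C := by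
  simp [ip, Matrix.transpose_smul, Matrix.smul_mul]

lemma ip_add_right (A B C : Matrix (Fin d) (Fin d) ℝ) : ip A (B + C) = ip A B + ip A C := by
  simp [ip, Matrix.mul_add]

lemma ip_smul_right (t : ℝ) (A C : Matrix (Fin d) (Fin d) ℝ) : ip A (t • C) = t * ip A C := by
  simp [ip, Matrix.mul_smul]

/-- The averaging operator `B ↦ 𝔼ⱼ Nⱼ B Nⱼ`. -/
noncomputable def Phi (N : ι → Matrix (Fin d) (Fin d) ℝ) :
    Matrix (Fin d) (Fin d) ℝ →ₗ[ℝ] Matrix (Fin d) (Fin d) ℝ :=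
  (Fintype.card ι : ℝ)⁻¹ • ∑ j, (LinearMap.mulLeft ℝ (N j)).comp (LinearMap.mulRight ℝ (N j))

lemma Phi_apply (N : ι → Matrix (Fin d) (Fin d) ℝ) (B : Matrix (Fin d) (Fin d) ℝ) :
    Phi N B = (Fintype.card ι : ℝ)⁻¹ • ∑ j, N j * B * N j := by
  simp [Phi, LinearMap.sum_apply, mul_assoc]

section props
variable {N : ι → Matrix (Fin d) (Fin d) ℝ}
  (hs : ∀ j, (N j)ᵀ = N j) (hi : ∀ j, N j * N j = N j)

include hs in
lemma ip_Phi_comm (A B : Matrix (Fin d) (Fin d) ℝ) : ip A (Phi N B) = ip (Phi N A) B := by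
  rw [Phi_apply, Phi_apply, ip_smul_right, ip_smul_left]
  congr 1
  simp only [ip, Finset.mul_sum, Finset.sum_mul, Matrix.trace_sum, Matrix.transpose_sum]
  apply Finset.sum_congr rfl
  intro j _
  simp only [Matrix.transpose_mul, hs j]
  rw [show Aᵀ * (N j * B * N j) = (Aᵀ * N j * B) * N j from by noncomm_ring,
    Matrix.trace_mul_comm]
  congr 1
  noncomm_ring

include hs hi in
lemma ip_Phi_self_nonneg (A : Matrix (Fin d) (Fin d) ℝ) : 0 ≤ ip A (Phi N A) := by
  rw [Phi_apply, ip_smul_right]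
  apply mul_nonneg (by positivity)
  rw [ip, Finset.mul_sum, Matrix.trace_sum]
  apply Finset.sum_nonneg
  intro j _
  have e1 : (N j * A * N j)ᵀ * (N j * A * N j) = N j * (Aᵀ * (N j * A * N j)) := by
    simp only [Matrix.transpose_mul, hs j]
    rw [show N j * (Aᵀ * N j) * (N j * A * N j)
        = N j * (Aᵀ * ((N j * N j) * A * N j)) from by noncomm_ring, hi j]
  have e2 : (Aᵀ * (N j * A * N j)).trace = ((N j * A * N j)ᵀ * (N j * A * N j)).trace := by
    rw [e1, Matrix.trace_mul_comm (N j) (Aᵀ * (N j * A * N j)),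
      show Aᵀ * (N j * A * N j) * N j = Aᵀ * (N j * A * (N j * N j)) from by noncomm_ring, hi j]
  rw [e2]
  exact trace_transpose_mul_self_nonneg _

include hs hi in
lemma ip_pow_self_nonneg : ∀ (k : ℕ) (A : Matrix (Fin d) (Fin d) ℝ),
    0 ≤ ip A ((Phi N ^ k) A) := by
  intro k
  induction k using Nat.twoStepInduction with
  | zero => intro A; simpa using ip_self_nonneg A
  | one => intro A; simpa using ip_Phi_self_nonneg hs hi A
  | more k ih _ =>
    intro A
    have hp : Phi N ^ (k + 2) = Phi N * Phi N ^ k * Phi N := by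
      rw [pow_succ, pow_succ']
    rw [hp]
    simp only [Module.End.mul_apply]
    rw [ip_Phi_comm hs]
    exact ih _

include hs in
lemma ip_pow_comm : ∀ (k : ℕ) (A B : Matrix (Fin d) (Fin d) ℝ),
    ip A ((Phi N ^ k) B) = ip ((Phi N ^ k) A) B := by
  intro k
  induction k with
  | zero => intro A B; simp
  | succ k ih =>
    intro A B
    rw [pow_succ, Module.End.mul_apply, ih, ip_Phi_comm hs, ← Module.End.mul_apply,
      ← pow_succ', pow_succ]

end props

noncomputable def gS (N : ι → Matrix (Fin d) (Fin d) ℝ) (k : ℕ) : ℝ :=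
  ip 1 ((Phi N ^ k) 1)

section props3
variable {N : ι → Matrix (Fin d) (Fin d) ℝ}
  (hs : ∀ j, (N j)ᵀ = N j) (hi : ∀ j, N j * N j = N j)

include hs hi in
lemma gS_nonneg (k : ℕ) : 0 ≤ gS N k := ip_pow_self_nonneg hs hi k 1

include hs hi in
lemma gS_logconvex (k : ℕ) : gS N (k + 1) ^ 2 ≤ gS N k * gS N (k + 2) := by
  set v : Matrix (Fin d) (Fin d) ℝ := Phi N 1 with hv
  have hb : gS N (k + 1) = ip 1 ((Phi N ^ k) v) := by
    rw [gS, pow_succ, Module.End.mul_apply]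
  have ha : gS N (k + 2) = ip v ((Phi N ^ k) v) := by
    rw [gS, show Phi N ^ (k + 2) = Phi N * Phi N ^ k * Phi N from by rw [pow_succ, pow_succ']]
    simp only [Module.End.mul_apply]
    rw [ip_Phi_comm hs]
  have key : ∀ t : ℝ, 0 ≤ ip v ((Phi N ^ k) v) * (t * t)
      + (2 * ip 1 ((Phi N ^ k) v)) * t + gS N k := by
    intro t
    have h0 := ip_pow_self_nonneg hs hi k (1 + t • v)
    have hexp : ip (1 + t • v) ((Phi N ^ k) (1 + t • v))
        = ip 1 ((Phi N ^ k) 1) + t * ip 1 ((Phi N ^ k) v)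
          + t * ip v ((Phi N ^ k) 1) + (t * t) * ip v ((Phi N ^ k) v) := by
      rw [map_add, LinearMap.map_smul]
      rw [ip_add_left, ip_add_right, ip_add_right, ip_smul_left, ip_smul_left,
        ip_smul_right, ip_smul_right]
      ring
    have hcross : ip v ((Phi N ^ k) 1) = ip 1 ((Phi N ^ k) v) := by
      rw [ip_pow_comm hs, ip_symm]
    rw [hexp, hcross] at h0
    rw [gS]
    nlinarith [h0]
  have hd := discrim_le_zero key
  rw [discrim] at hd
  rw [hb, ha]
  nlinarith [hd]

include hs hi in
lemma gS_convex (k : ℕ) : 2 * gS N (k + 1) ≤ gS N k + gS N (k + 2) := by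
  have h1 := gS_logconvex hs hi k
  have h2 := gS_nonneg hs hi k
  have h3 := gS_nonneg hs hi (k + 1)
  have h4 := gS_nonneg hs hi (k + 2)
  nlinarith [sq_nonneg (gS N k - gS N (k + 2)), sq_nonneg (gS N k + gS N (k + 2) - 2 * gS N (k + 1))]

include hs in
lemma Phi_pow_one : ∀ k : ℕ, (Phi N ^ k) 1
    = ((Fintype.card ι : ℝ)⁻¹ ^ k) • ∑ σ : Fin k → ι, (pM N σ)ᵀ * pM N σ := by
  intro k
  induction k with
  | zero =>
    rw [Fintype.sum_unique fun σ : Fin 0 → ι => (pM N σ)ᵀ * pM N σ]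
    simp [pM_zero]
  | succ k ih =>
    rw [pow_succ', Module.End.mul_apply, ih, LinearMap.map_smul, Phi_apply, smul_smul,
      ← pow_succ]
    congr 1
    rw [sum_pi_cons (fun τ : Fin (k + 1) → ι => (pM N τ)ᵀ * pM N τ)]
    apply Finset.sum_congr rfl
    intro j _
    rw [Finset.mul_sum, Finset.sum_mul]
    apply Finset.sum_congr rfl
    intro σ _
    rw [pM_cons, Matrix.transpose_mul, hs j]
    noncomm_ring

include hs in
lemma gS_eq (k : ℕ) : gS N k
    = ((Fintype.card ι : ℝ)⁻¹ ^ k) * ∑ σ : Fin k → ι, ((pM N σ)ᵀ * pM N σ).trace := by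
  rw [gS, Phi_pow_one hs, ip, Matrix.transpose_one, Matrix.one_mul, Matrix.trace_smul,
    Matrix.trace_sum, smul_eq_mul]

end props3

section main
variable [Nonempty ι]
variable (Q : ι → (EuclideanSpace ℝ (Fin d) →L[ℝ] EuclideanSpace ℝ (Fin d)))

lemma fE_eq (hsa : ∀ j, IsSelfAdjoint (Q j)) (hidem : ∀ j, Q j * Q j = Q j) (k : ℕ) :
    fE d Q k = gS (fun j => toMat (Q j)) k - gS (fun j => toMat (Q j)) (k + 1) := by
  classical
  set N : ι → Matrix (Fin d) (Fin d) ℝ := fun j => toMat (Q j) with hN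
  have hs : ∀ j, (N j)ᵀ = N j := by
    intro j
    show (toMat (Q j))ᵀ = toMat (Q j)
    rw [← toMat_adjoint, ContinuousLinearMap.isSelfAdjoint_iff'.mp (hsa j)]
  have hi : ∀ j, N j * N j = N j := by
    intro j
    show toMat (Q j) * toMat (Q j) = toMat (Q j)
    rw [← toMat_mul, hidem j]
  have hcard : (Fintype.card ι : ℝ) ≠ 0 := Nat.cast_ne_zero.mpr Fintype.card_ne_zero
  have hterm : ∀ (σ : Fin k → ι) (j : ι),
      LinearMap.trace ℝ (EuclideanSpace ℝ (Fin d))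
        ((ContinuousLinearMap.adjoint (prodSeq Q σ) * (1 - Q j) * prodSeq Q σ).toLinearMap)
      = ((pM N σ)ᵀ * pM N σ).trace - ((pM N σ)ᵀ * (N j * pM N σ)).trace := by
    intro σ j
    rw [trace_toMat, toMat_mul, toMat_mul, toMat_adjoint, toMat_sub, toMat_one, toMat_prodSeq,
      ← hN]
    rw [show (pM N σ)ᵀ * (1 - N j) * pM N σ
        = (pM N σ)ᵀ * pM N σ - (pM N σ)ᵀ * (N j * pM N σ) from by noncomm_ring,
      Matrix.trace_sub]
  have hsn : ∀ (σ : Fin k → ι) (j : ι),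
      ((pM N (Fin.snoc σ j))ᵀ * pM N (Fin.snoc σ j)).trace
        = ((pM N σ)ᵀ * (N j * pM N σ)).trace := by
    intro σ j
    rw [pM_snoc, Matrix.transpose_mul, hs j]
    rw [show (pM N σ)ᵀ * N j * (N j * pM N σ)
        = (pM N σ)ᵀ * ((N j * N j) * pM N σ) from by noncomm_ring, hi j]
  rw [fE]
  have h1 : (∑ σ : Fin k → ι, ∑ j : ι,
        LinearMap.trace ℝ (EuclideanSpace ℝ (Fin d))
          ((ContinuousLinearMap.adjoint (prodSeq Q σ) * (1 - Q j) * prodSeq Q σ).toLinearMap))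
      = (Fintype.card ι : ℝ) * (∑ σ : Fin k → ι, ((pM N σ)ᵀ * pM N σ).trace)
        - ∑ σ : Fin k → ι, ∑ j : ι, ((pM N σ)ᵀ * (N j * pM N σ)).trace := by
    rw [Finset.mul_sum, ← Finset.sum_sub_distrib]
    apply Finset.sum_congr rfl
    intro σ _
    rw [Finset.sum_congr rfl fun j _ => hterm σ j, Finset.sum_sub_distrib, Finset.sum_const,
      Finset.card_univ, nsmul_eq_mul]
  rw [h1]
  have hgk : gS N k
      = (Fintype.card ι : ℝ)⁻¹ ^ k * ∑ σ : Fin k → ι, ((pM N σ)ᵀ * pM N σ).trace := gS_eq hs k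
  have hgk1 : gS N (k + 1) = (Fintype.card ι : ℝ)⁻¹ ^ (k + 1)
      * ∑ σ : Fin k → ι, ∑ j : ι, ((pM N σ)ᵀ * (N j * pM N σ)).trace := by
    rw [gS_eq hs (k + 1)]
    congr 1
    rw [sum_pi_snoc (fun τ : Fin (k + 1) → ι => ((pM N τ)ᵀ * pM N τ).trace), Finset.sum_comm]
    exact Finset.sum_congr rfl fun σ _ => Finset.sum_congr rfl fun j _ => hsn σ j
  rw [hgk, hgk1]
  have hcc : (Fintype.card ι : ℝ)⁻¹ ^ (k + 1) * (Fintype.card ι : ℝ)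
      = (Fintype.card ι : ℝ)⁻¹ ^ k := by
    rw [pow_succ, mul_assoc, inv_mul_cancel₀ hcard, mul_one]
  rw [mul_sub, ← mul_assoc, hcc]

end main

end RandProjAux

open RandProjAux Matrix

theorem random_ordering_expected_trace_bound (d : ℕ) {ι : Type*} [Fintype ι] [Nonempty ι]
    (Q : ι → (EuclideanSpace ℝ (Fin d) →L[ℝ] EuclideanSpace ℝ (Fin d)))
    (hsa : ∀ j, IsSelfAdjoint (Q j)) (hidem : ∀ j, Q j * Q j = Q j) :
    (∀ k : ℕ, fE d Q (k + 1) ≤ fE d Q k)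
      ∧ ∀ k : ℕ, 1 ≤ k →
          fE d Q k ≤ (1 / (k : ℝ)) * ((Fintype.card ι : ℝ)⁻¹ *
              ∑ j, LinearMap.trace ℝ (EuclideanSpace ℝ (Fin d)) ((Q j).toLinearMap))
            ∧ (1 / (k : ℝ)) * ((Fintype.card ι : ℝ)⁻¹ *
              ∑ j, LinearMap.trace ℝ (EuclideanSpace ℝ (Fin d)) ((Q j).toLinearMap))
              ≤ (d : ℝ) / k := by
  classical
  set N : ι → Matrix (Fin d) (Fin d) ℝ := fun j => toMat (Q j) with hN
  have hs : ∀ j, (N j)ᵀ = N j := by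
    intro j
    show (toMat (Q j))ᵀ = toMat (Q j)
    rw [← toMat_adjoint, ContinuousLinearMap.isSelfAdjoint_iff'.mp (hsa j)]
  have hi : ∀ j, N j * N j = N j := by
    intro j
    show toMat (Q j) * toMat (Q j) = toMat (Q j)
    rw [← toMat_mul, hidem j]
  have hcard : (Fintype.card ι : ℝ) ≠ 0 := Nat.cast_ne_zero.mpr Fintype.card_ne_zero
  have hfe : ∀ k, fE d Q k = gS N k - gS N (k + 1) := fun k => fE_eq Q hsa hidem k
  have part1 : ∀ k, fE d Q (k + 1) ≤ fE d Q k := by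
    intro k
    rw [hfe, hfe]
    have := gS_convex hs hi k
    linarith
  refine ⟨part1, ?_⟩
  intro k hk
  have hkpos : (0 : ℝ) < (k : ℝ) := by exact_mod_cast hk
  have hg1' : gS N 1 = (Fintype.card ι : ℝ)⁻¹ * ∑ j, (N j).trace := by
    rw [gS, pow_one, Phi_apply, ip, Matrix.transpose_one, Matrix.one_mul, Matrix.trace_smul,
      smul_eq_mul, Matrix.trace_sum]
    congr 1
    apply Finset.sum_congr rfl
    intro j _
    rw [Matrix.mul_one, hi j]
  have hg1 : gS N 1 = (Fintype.card ι : ℝ)⁻¹ *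
      ∑ j, LinearMap.trace ℝ (EuclideanSpace ℝ (Fin d)) ((Q j).toLinearMap) := by
    rw [hg1']
    congr 1
    exact Finset.sum_congr rfl fun j _ => (trace_toMat (Q j)).symm
  have anti : Antitone (fE d Q) := antitone_nat_of_succ_le part1
  have htel : ∑ j ∈ Finset.range k, fE d Q (j + 1) = gS N 1 - gS N (k + 1) := by
    rw [Finset.sum_congr rfl fun j _ => hfe (j + 1),
      Finset.sum_range_sub' (fun i => gS N (i + 1)) k]
  have hsum : (k : ℝ) * fE d Q k ≤ gS N 1 := by
    have h5 : ∀ j ∈ Finset.range k, fE d Q k ≤ fE d Q (j + 1) := fun j hj =>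
      anti (Nat.succ_le_of_lt (Finset.mem_range.mp hj))
    have h6 := Finset.sum_le_sum h5
    rw [htel, Finset.sum_const, Finset.card_range, nsmul_eq_mul] at h6
    have h7 := gS_nonneg hs hi (k + 1)
    linarith
  constructor
  · rw [← hg1]
    rw [show (1 / (k : ℝ)) * gS N 1 = gS N 1 / k from by ring, le_div_iff₀ hkpos]
    linarith
  · rw [← hg1]
    have each : ∀ j, (N j).trace ≤ (d : ℝ) := by
      intro j
      have h9 : (0 : ℝ) ≤ ((1 - N j)ᵀ * (1 - N j)).trace := trace_transpose_mul_self_nonneg _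
      have h10 : (1 - N j)ᵀ * (1 - N j) = 1 - N j := by
        rw [Matrix.transpose_sub, Matrix.transpose_one, hs j]
        rw [show ((1 : Matrix (Fin d) (Fin d) ℝ) - N j) * (1 - N j)
            = 1 - N j - N j + N j * N j from by noncomm_ring, hi j]
        abel
      rw [h10, Matrix.trace_sub, Matrix.trace_one] at h9
      simp only [Fintype.card_fin] at h9
      linarith
    have htr : gS N 1 ≤ (d : ℝ) := by
      rw [hg1']
      have h11 : ∑ j, (N j).trace ≤ (Fintype.card ι : ℝ) * d := by
        calc ∑ j, (N j).trace ≤ ∑ _j : ι, (d : ℝ) := Finset.sum_le_sum fun j _ => each j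
          _ = (Fintype.card ι : ℝ) * d := by
              rw [Finset.sum_const, Finset.card_univ, nsmul_eq_mul]
      calc (Fintype.card ι : ℝ)⁻¹ * ∑ j, (N j).trace
          ≤ (Fintype.card ι : ℝ)⁻¹ * ((Fintype.card ι : ℝ) * d) := by
            apply mul_le_mul_of_nonneg_left h11 (by positivity)
        _ = (d : ℝ) := by field_simp
    calc (1 / (k : ℝ)) * gS N 1 ≤ (1 / (k : ℝ)) * d := by
          apply mul_le_mul_of_nonneg_left htr (by positivity)
      _ = (d : ℝ) / k := by ring
end
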